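/- arXiv:1802.04870 — 2 statements merged into one kernel-verified Lean document; each statement's English description precedes it below -/
import Mathlib

section
/- If {v_0, ..., v_{k-1}} with k ≥ 2 forms a domination cycle in a finite simplicial graph Γ (that is, v_0 ≥ v_{k-1} ≥ ... ≥ v_1 ≥ v_0 under the domination relation), then Γ admits a nontrivial graph automorphism. -/
/-- `w` dominates `v` in `Γ`: lk(v) ⊆ st(w). -/
def Dominates {V : Type*} (Γ : SimpleGraph V) (w v : V) : Prop :=
  Γ.neighborSet v ⊆ Γ.neighborSet w ∪ {w}

/-!
Going once around the cycle, transitivity of domination gives `v 0 ≥ v 1` and `v 1 ≥ v 0`.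
Two distinct mutually dominating vertices have the same neighbours apart from each other, so
the transposition exchanging them is a graph automorphism.
-/

open Fin.NatCast in
theorem Fin.rel_of_forall_rel_add_one {α : Type*} {r : α → α → Prop} [Std.Refl r] [IsTrans α r]
    {k : ℕ} [NeZero k] {f : Fin k → α} (h : ∀ i, r (f (i + 1)) (f i)) (i j : Fin k) :
    r (f j) (f i) := by
  have step : ∀ n : ℕ, r (f (i + n)) (f i) := by
    intro n
    induction n with
    | zero => simpa using refl_of r (f i)
    | succ n ih => exact _root_.trans (by simpa [add_assoc] using h (i + n)) ih
  simpa using step (j - i).val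

namespace Dominates

variable {V : Type*} {Γ : SimpleGraph V}

protected theorem refl (a : V) : Dominates Γ a a := fun _ hx => Or.inl hx

protected theorem trans {a b c : V} (hab : Dominates Γ a b) (hbc : Dominates Γ b c) :
    Dominates Γ a c := by
  intro x hxc
  rcases hbc hxc with hxb | rfl
  · exact hab hxb
  · rcases hab (Γ.mem_neighborSet _ _ |>.2 hxc.symm) with hca | rfl
    · rcases hbc (Γ.mem_neighborSet _ _ |>.2 hca.symm) with hba | rfl
      · exact Or.inl hba.symm
      · exact Or.inr rfl
    · exact Or.inl hxc

instance : Std.Refl (Dominates Γ) := ⟨Dominates.refl⟩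

instance : IsTrans V (Dominates Γ) := ⟨fun _ _ _ => Dominates.trans⟩

theorem adj_of_adj_of_ne {a b x : V} (hab : Dominates Γ a b) (hxa : x ≠ a) (hxb : Γ.Adj x b) :
    Γ.Adj x a :=
  ((hab hxb.symm).resolve_right hxa).symm

theorem adj_swap_right [DecidableEq V] {a b x y : V} (hab : Dominates Γ a b)
    (hba : Dominates Γ b a) (hxa : x ≠ a) (hxb : x ≠ b) (h : Γ.Adj x y) :
    Γ.Adj x (Equiv.swap a b y) := by
  by_cases hya : y = a
  · subst hya; rw [Equiv.swap_apply_left]; exact hba.adj_of_adj_of_ne hxb h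
  by_cases hyb : y = b
  · subst hyb; rw [Equiv.swap_apply_right]; exact hab.adj_of_adj_of_ne hxa h
  · rwa [Equiv.swap_apply_of_ne_of_ne hya hyb]

theorem adj_swap [DecidableEq V] {a b x y : V} (hab : Dominates Γ a b)
    (hba : Dominates Γ b a) (h : Γ.Adj x y) :
    Γ.Adj (Equiv.swap a b x) (Equiv.swap a b y) := by
  by_cases hx : x = a ∨ x = b
  · by_cases hy : y = a ∨ y = b
    · have hxy := h.ne
      rcases hx with rfl | rfl <;> rcases hy with rfl | rfl <;> simp_all [h.symm]
    · push Not at hy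
      rw [Equiv.swap_apply_of_ne_of_ne hy.1 hy.2]
      exact (adj_swap_right hab hba hy.1 hy.2 h.symm).symm
  · push Not at hx
    rw [Equiv.swap_apply_of_ne_of_ne hx.1 hx.2]
    exact adj_swap_right hab hba hx.1 hx.2 h

def swapIso [DecidableEq V] {a b : V} (hab : Dominates Γ a b) (hba : Dominates Γ b a) :
    Γ ≃g Γ where
  toEquiv := Equiv.swap a b
  map_rel_iff' := ⟨fun h => by simpa using adj_swap hab hba h, adj_swap hab hba⟩

end Dominates

/-- a domination cycle of length k ≥ 2 yields a nontrivial graph automorphism. -/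
theorem domination_cycle_gives_automorphism {V : Type*}
    (Γ : SimpleGraph V) (k : ℕ) (hk : 2 ≤ k) (v : Fin k → V)
    (hinj : Function.Injective v)
    (hcyc : ∀ i : Fin k, Dominates Γ (v (i + ⟨1, by omega⟩)) (v i)) :
    ∃ e : Γ ≃g Γ, e.toEquiv ≠ Equiv.refl V := by
  classical
  have : NeZero k := ⟨by omega⟩
  have hone : (⟨1, by omega⟩ : Fin k) = 1 := Fin.ext (by simp [Nat.mod_eq_of_lt hk])
  have h01 : (0 : Fin k) ≠ 1 := hone ▸ Fin.ne_of_val_ne zero_ne_one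
  rw [hone] at hcyc
  have hdom := Fin.rel_of_forall_rel_add_one hcyc
  exact ⟨Dominates.swapIso (hdom 1 0) (hdom 0 1),
    Equiv.swap_eq_refl_iff.not.2 (hinj.ne h01)⟩
end

section
/- In the right-angled Artin group A(Γ) on a finite simplicial graph Γ, if vertex w dominates vertex v (lk(v) ⊆ st(w)), then the map sending v to vw and fixing all other vertex generators extends to an automorphism of A(Γ). -/
/-- Commutation relations of the right-angled Artin group on Γ. -/
def raagRels {V : Type*} (Γ : SimpleGraph V) : Set (FreeGroup V) :=
  {r | ∃ v w : V, Γ.Adj v w ∧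
    r = FreeGroup.of v * FreeGroup.of w * (FreeGroup.of v)⁻¹ * (FreeGroup.of w)⁻¹}

/-!
Both `v ↦ v w^k` and `v ↦ v w^(-k)` respect the defining relations: if `b` is adjacent to `v`,
domination makes `b` adjacent or equal to `w`, so `b` commutes with `v w^k`. Since `w ≠ v`, the
transvections fix `w`, hence compose additively in the exponent and are mutually inverse.
-/

namespace RAAG

open PresentedGroup Function

variable {V : Type*} {Γ : SimpleGraph V}

lemma commute_of_adj {a b : V} (h : Γ.Adj a b) :
    Commute (of a : PresentedGroup (raagRels Γ)) (of b) :=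
  commutatorElement_eq_one_iff_commute.mp (one_of_mem ⟨a, b, h, rfl⟩)

lemma commute_of_dominates {v w b : V} (hdom : Γ.neighborSet v ⊆ Γ.neighborSet w ∪ {w})
    (hb : Γ.Adj v b) : Commute (of w : PresentedGroup (raagRels Γ)) (of b) := by
  rcases hdom hb with hwb | rfl
  · exact commute_of_adj hwb
  · exact Commute.refl _

section Lift

variable {G : Type*} [Group G]

lemma lift_mem_raagRels_eq_one {f : V → G} (hf : ∀ a b, Γ.Adj a b → Commute (f a) (f b)) :
    ∀ r ∈ raagRels Γ, FreeGroup.lift f r = 1 := by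
  rintro r ⟨a, b, hab, rfl⟩
  simpa only [map_mul, map_inv, FreeGroup.lift_apply_of, commutatorElement_def] using
    commutatorElement_eq_one_iff_commute.mpr (hf a b hab)

def lift (f : V → G) (hf : ∀ a b, Γ.Adj a b → Commute (f a) (f b)) :
    PresentedGroup (raagRels Γ) →* G :=
  toGroup (lift_mem_raagRels_eq_one hf)

@[simp]
lemma lift_of (f : V → G) (hf : ∀ a b, Γ.Adj a b → Commute (f a) (f b)) (u : V) :
    lift f hf (of u) = f u :=
  toGroup.of _

lemma commute_update [DecidableEq V] {f : V → G} (hf : ∀ a b, Γ.Adj a b → Commute (f a) (f b))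
    {v : V} {x : G} (hx : ∀ b, Γ.Adj v b → Commute x (f b)) :
    ∀ a b, Γ.Adj a b → Commute (update f v x a) (update f v x b) := by
  intro a b hab
  rcases eq_or_ne a v with rfl | ha
  · rw [update_self, update_of_ne hab.ne']
    exact hx b hab
  rcases eq_or_ne b v with rfl | hb
  · rw [update_self, update_of_ne ha]
    exact (hx a hab.symm).symm
  · rw [update_of_ne ha, update_of_ne hb]
    exact hf a b hab

end Lift

variable [DecidableEq V] {v w : V}

def transvection (hdom : Γ.neighborSet v ⊆ Γ.neighborSet w ∪ {w}) (k : ℤ) :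
    PresentedGroup (raagRels Γ) →* PresentedGroup (raagRels Γ) :=
  lift (update of v (of v * of w ^ k)) <| commute_update (fun _ _ => commute_of_adj)
    fun _ hb => (commute_of_adj hb).mul_left ((commute_of_dominates hdom hb).zpow_left k)

variable (hdom : Γ.neighborSet v ⊆ Γ.neighborSet w ∪ {w})

lemma transvection_of_self (k : ℤ) : transvection hdom k (of v) = of v * of w ^ k := by
  rw [transvection, lift_of, update_self]

lemma transvection_of_of_ne (k : ℤ) {u : V} (hu : u ≠ v) : transvection hdom k (of u) = of u := by
  rw [transvection, lift_of, update_of_ne hu]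

lemma transvection_comp (hvw : v ≠ w) (k l : ℤ) :
    (transvection hdom k).comp (transvection hdom l) = transvection hdom (k + l) := by
  ext u
  rcases eq_or_ne u v with rfl | hu
  · simp only [MonoidHom.comp_apply, transvection_of_self, map_mul, map_zpow,
      transvection_of_of_ne hdom _ hvw.symm, zpow_add, mul_assoc]
  · simp only [MonoidHom.comp_apply, transvection_of_of_ne hdom _ hu]

lemma transvection_zero : transvection hdom 0 = MonoidHom.id _ := by
  ext u
  rcases eq_or_ne u v with rfl | hu
  · simp [transvection_of_self]
  · simp [transvection_of_of_ne hdom _ hu]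

def transvectionAut (hvw : v ≠ w) (k : ℤ) : MulAut (PresentedGroup (raagRels Γ)) :=
  (transvection hdom k).toMulEquiv (transvection hdom (-k))
    (by rw [transvection_comp hdom hvw, neg_add_cancel, transvection_zero])
    (by rw [transvection_comp hdom hvw, add_neg_cancel, transvection_zero])

@[simp]
lemma transvectionAut_apply (hvw : v ≠ w) (k : ℤ) (x : PresentedGroup (raagRels Γ)) :
    transvectionAut hdom hvw k x = transvection hdom k x :=
  rfl

end RAAG

open Classical in
theorem dominated_transvection_automorphism_general {V : Type*} (Γ : SimpleGraph V)
    (v w : V) (hvw : v ≠ w)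
    (hdom : Γ.neighborSet v ⊆ Γ.neighborSet w ∪ {w}) :
    ∃ e : MulAut (PresentedGroup (raagRels Γ)),
      e (PresentedGroup.of v) = PresentedGroup.of v * PresentedGroup.of w ∧
      ∀ u : V, u ≠ v → e (PresentedGroup.of u) = PresentedGroup.of u :=
  ⟨RAAG.transvectionAut hdom hvw 1, by simpa using RAAG.transvection_of_self hdom 1,
    fun _ hu => RAAG.transvection_of_of_ne hdom 1 hu⟩

/-- a dominated transvection v ↦ vw extends to an automorphism of A(Γ). -/
theorem dominated_transvection_automorphism {V : Type*} [Fintype V] (Γ : SimpleGraph V)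
    (v w : V) (hvw : v ≠ w)
    (hdom : Γ.neighborSet v ⊆ Γ.neighborSet w ∪ {w}) :
    ∃ e : MulAut (PresentedGroup (raagRels Γ)),
      e (PresentedGroup.of v) = PresentedGroup.of v * PresentedGroup.of w ∧
      ∀ u : V, u ≠ v → e (PresentedGroup.of u) = PresentedGroup.of u :=
  dominated_transvection_automorphism_general Γ v w hvw hdom
end
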